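/- arXiv:1306.5100 — 3 statements merged into one kernel-verified Lean document; each statement's English description precedes it below -/
import Mathlib

section
/- Suppose nonnegative reals satisfy: (discrete local reliability) $d^2 \le C_{dlr}^2\, R^2$ where $R^2$ is the estimator sum over refined edges; (quasi-orthogonality) for all $\alpha > 0$, $e_\ell^2 \le (1+\alpha) e_*^2 + d^2 + \alpha^{-1} C_o\, \delta^2$ with $\delta^2 \le R^2$; (efficiency) $C_{eff}^{-2}\, \varrho_\ell^2 \le e_\ell^2 + o_\ell^2$ with $o_\ell^2 - o_*^2 \le R^2$ and $o_\ell \le \varrho_\ell$; and (error reduction) $e_*^2 + o_*^2 \le q\,(e_\ell^2 + o_\ell^2)$ for some $0 < q \le q_\star := \frac{1 - \theta (C_{dlr}^2 + 1 + \alpha^{-1} C_o) C_{eff}^2}{1+\alpha} > 0$. Then $\theta\, \varrho_\ell^2 \le R^2$. -/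
/-- Optimality of Dörfler marking, abstract version: sufficient error reduction
forces the set of refined edges to satisfy the Dörfler criterion. -/
theorem doerfler_marking_optimality
    (el estar ol ostar ϱl R d δ θ α q Cdlr Co Ceff : ℝ)
    (hel : 0 ≤ el) (hestar : 0 ≤ estar) (hol : 0 ≤ ol) (hostar : 0 ≤ ostar)
    (hϱl : 0 ≤ ϱl) (hR : 0 ≤ R) (hd : 0 ≤ d) (hδ : 0 ≤ δ)
    (hθ : 0 < θ) (hα : 0 < α) (hCdlr : 0 < Cdlr) (hCo : 0 < Co) (hCeff : 0 < Ceff)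
    (hdlr : d ^ 2 ≤ Cdlr ^ 2 * R ^ 2)
    (horth : el ^ 2 ≤ (1 + α) * estar ^ 2 + d ^ 2 + α⁻¹ * Co * δ ^ 2)
    (hδR : δ ^ 2 ≤ R ^ 2)
    (heff : (Ceff ^ 2)⁻¹ * ϱl ^ 2 ≤ el ^ 2 + ol ^ 2)
    (hosc : ol ^ 2 - ostar ^ 2 ≤ R ^ 2)
    (holϱ : ol ≤ ϱl)
    (hqstar : 0 < (1 - θ * (Cdlr ^ 2 + 1 + α⁻¹ * Co) * Ceff ^ 2) / (1 + α))
    (hq0 : 0 < q)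
    (hq : q ≤ (1 - θ * (Cdlr ^ 2 + 1 + α⁻¹ * Co) * Ceff ^ 2) / (1 + α))
    (hred : estar ^ 2 + ostar ^ 2 ≤ q * (el ^ 2 + ol ^ 2)) :
    θ * ϱl ^ 2 ≤ R ^ 2 := by
  have hαinv : 0 < α⁻¹ := inv_pos.mpr hα
  have hC : 0 < Cdlr ^ 2 + 1 + α⁻¹ * Co := by positivity
  have hA : el ^ 2 + ol ^ 2 ≤ (1 + α) * q * (el ^ 2 + ol ^ 2)
      + (Cdlr ^ 2 + 1 + α⁻¹ * Co) * R ^ 2 := by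
    nlinarith [mul_le_mul_of_nonneg_left hδR (le_of_lt (mul_pos hαinv hCo)),
      mul_le_mul_of_nonneg_left hred (by linarith : (0:ℝ) ≤ 1 + α),
      mul_nonneg hα.le (sq_nonneg ostar)]
  have hB : θ * (Cdlr ^ 2 + 1 + α⁻¹ * Co) * Ceff ^ 2 ≤ 1 - (1 + α) * q := by
    have hq' := (le_div_iff₀ (by linarith : (0:ℝ) < 1 + α)).mp hq
    linarith
  have hEO : 0 ≤ el ^ 2 + ol ^ 2 := by positivity
  have hstep : θ * (Cdlr ^ 2 + 1 + α⁻¹ * Co) * Ceff ^ 2 * (el ^ 2 + ol ^ 2)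
      ≤ (Cdlr ^ 2 + 1 + α⁻¹ * Co) * R ^ 2 := by
    have h := mul_le_mul_of_nonneg_right hB hEO
    linarith
  have hstep2 : θ * Ceff ^ 2 * (el ^ 2 + ol ^ 2) ≤ R ^ 2 := by
    rw [show θ * (Cdlr ^ 2 + 1 + α⁻¹ * Co) * Ceff ^ 2 * (el ^ 2 + ol ^ 2)
        = (Cdlr ^ 2 + 1 + α⁻¹ * Co) * (θ * Ceff ^ 2 * (el ^ 2 + ol ^ 2)) by ring] at hstep
    exact le_of_mul_le_mul_left hstep hC
  have heff' : ϱl ^ 2 ≤ Ceff ^ 2 * (el ^ 2 + ol ^ 2) := by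
    have h2 : (0:ℝ) < Ceff ^ 2 := by positivity
    calc ϱl ^ 2 = Ceff ^ 2 * ((Ceff ^ 2)⁻¹ * ϱl ^ 2) := by field_simp
    _ ≤ Ceff ^ 2 * (el ^ 2 + ol ^ 2) := mul_le_mul_of_nonneg_left heff h2.le
  calc θ * ϱl ^ 2 ≤ θ * (Ceff ^ 2 * (el ^ 2 + ol ^ 2)) :=
        mul_le_mul_of_nonneg_left heff' hθ.le
  _ ≤ R ^ 2 := by linarith
end

section
/- Suppose nonnegative reals $\eta_{\ell+1}, \eta_\ell, \eta_M, w_{\ell+1}, w_\ell, w_M, d$ satisfy: $\eta_{\ell+1}^2 \le (1+\delta)(\eta_\ell^2 - \tfrac12 \eta_M^2) + (1+\delta^{-1}) C d^2$ for all $\delta > 0$, $w_{\ell+1}^2 \le w_\ell^2 - \tfrac14 w_M^2$, and the Dörfler property $\tilde\theta(\eta_\ell^2 + w_\ell^2) \le \eta_M^2 + w_M^2$ with $0 < \tilde\theta \le 1$, $\eta_M \le \eta_\ell$, $w_M \le w_\ell$. Then for $\tilde\varrho_\ell^2 := \eta_\ell^2 + w_\ell^2$ there holds $\tilde\varrho_{\ell+1}^2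 \le (1+\delta)(1 - \tilde\theta/4)\,\tilde\varrho_\ell^2 + (1+\delta^{-1}) C d^2$ for all $\delta > 0$; in particular, choosing $\delta$ small enough yields $\tilde\varrho_{\ell+1}^2 \le q\, \tilde\varrho_\ell^2 + C' d^2$ with $q := (1+\delta)(1-\tilde\theta/4) < 1$. -/
/-- Abstract core of the estimator reduction: marked-contribution reduction plus the
Dörfler property yield uniform reduction of the total estimator up to `d²`. -/
theorem estimator_reduction_core
    (ηl ηl1 ηM wl wl1 wM d C θ' : ℝ)
    (hηl : 0 ≤ ηl) (hηl1 : 0 ≤ ηl1) (hηM : 0 ≤ ηM)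
    (hwl : 0 ≤ wl) (hwl1 : 0 ≤ wl1) (hwM : 0 ≤ wM) (hd : 0 ≤ d)
    (hC : 0 ≤ C) (hθ'0 : 0 < θ') (hθ'1 : θ' ≤ 1)
    (hηred : ∀ δ > (0:ℝ),
      ηl1 ^ 2 ≤ (1 + δ) * (ηl ^ 2 - (1 / 2) * ηM ^ 2) + (1 + δ⁻¹) * C * d ^ 2)
    (hwred : wl1 ^ 2 ≤ wl ^ 2 - (1 / 4) * wM ^ 2)
    (hdoerfler : θ' * (ηl ^ 2 + wl ^ 2) ≤ ηM ^ 2 + wM ^ 2)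
    (hηMle : ηM ≤ ηl) (hwMle : wM ≤ wl) :
    (∀ δ > (0:ℝ),
      ηl1 ^ 2 + wl1 ^ 2
        ≤ (1 + δ) * (1 - θ' / 4) * (ηl ^ 2 + wl ^ 2) + (1 + δ⁻¹) * C * d ^ 2)
    ∧ ∃ δ > (0:ℝ), ∃ C' : ℝ, (1 + δ) * (1 - θ' / 4) < 1
        ∧ ηl1 ^ 2 + wl1 ^ 2
            ≤ (1 + δ) * (1 - θ' / 4) * (ηl ^ 2 + wl ^ 2) + C' * d ^ 2 := by
  have hmain : ∀ δ > (0:ℝ),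
      ηl1 ^ 2 + wl1 ^ 2
        ≤ (1 + δ) * (1 - θ' / 4) * (ηl ^ 2 + wl ^ 2) + (1 + δ⁻¹) * C * d ^ 2 := by
    intro δ hδ
    have h1 := hηred δ hδ
    have hw2 : wM ^ 2 ≤ wl ^ 2 := by nlinarith
    nlinarith [mul_nonneg hδ.le (sub_nonneg.2 hw2),
      mul_nonneg hδ.le (sub_nonneg.2 hdoerfler)]
  refine ⟨hmain, θ' / 8, by positivity, (1 + (θ' / 8)⁻¹) * C, ?_, hmain _ (by positivity)⟩
  nlinarith [sq_nonneg θ']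
end

section
/- Assume nonnegative quantities satisfy, for every $\varepsilon, \delta, \alpha \in (0,1)$ and fixed $\beta > 0$ chosen with $\beta C_{red} \le 1$: (a) $(1-\alpha) e_{\ell+1}^2 + \alpha^{-1} C_o\, o_{\ell+1}^2 + \beta r_{\ell+1}^2 \le e_\ell^2 + \alpha^{-1} C_o\, o_\ell^2 + \beta q\, r_\ell^2 + (\beta C_{red} - 1) d^2$, (b) reliability $e_\ell \le C_{rel}\, r_\ell$, and (c) $o_\ell \le r_\ell$, where $0 < q < 1$. Then there exist $\gamma, \lambda > 0$ and $0 < \kappa < 1$, depending only on $q, \beta, C_{rel}, C_o, C_{red}$, such that $\Delta_\ell := e_\ell^2 + \lambda o_\ell^2 + \gamma r_\ell^2$ satisfies $\Delta_{\ell+1} \le \kappa \Delta_\ell$. -/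
/-!
Writing `Φ_ℓ := (1 - α) e_ℓ² + α⁻¹ C_o o_ℓ² + β r_ℓ²`, estimate (a) with the `d`-term dropped
says `Φ_{ℓ+1} ≤ Φ_ℓ + α e_ℓ² - β (1 - q) r_ℓ²`. Reliability bounds `α e_ℓ²` by `α C_rel² r_ℓ²`,
which for small `α` eats at most half of `β (1 - q) r_ℓ²`; the remaining half dominates a fixed
fraction `θ` of `Φ_ℓ`, because every summand of `Φ_ℓ` is bounded by a multiple of `r_ℓ²`.
Hence `Φ_{ℓ+1} ≤ (1 - θ) Φ_ℓ`, and `Φ_ℓ = (1 - α) Δ_ℓ` for `γ = β / (1 - α)`,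
`λ = α⁻¹ C_o / (1 - α)`.
-/

theorem add_le_one_sub_mul_of_absorb {E O R C c β q α θ : ℝ}
    (hE0 : 0 ≤ E) (hR : 0 ≤ R) (hc : 0 ≤ c) (hα : 0 ≤ α) (hθ : 0 ≤ θ)
    (hE : E ≤ C * R) (hO : O ≤ R)
    (hαC : α * C ≤ β * (1 - q) / 2) (hθS : θ * (C + c + β) ≤ β * (1 - q) / 2) :
    E + c * O + β * q * R ≤ (1 - θ) * ((1 - α) * E + c * O + β * R) := by
  have hαE : α * E ≤ β * (1 - q) / 2 * R :=
    calc α * E ≤ α * (C * R) := mul_le_mul_of_nonneg_left hE hα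
      _ = α * C * R := by ring
      _ ≤ β * (1 - q) / 2 * R := mul_le_mul_of_nonneg_right hαC hR
  have hΦ : (1 - α) * E + c * O + β * R ≤ (C + c + β) * R := by
    linarith [mul_le_mul_of_nonneg_left hO hc, mul_nonneg hα hE0]
  have hθΦ : θ * ((1 - α) * E + c * O + β * R) ≤ β * (1 - q) / 2 * R :=
    calc θ * ((1 - α) * E + c * O + β * R) ≤ θ * ((C + c + β) * R) :=
          mul_le_mul_of_nonneg_left hΦ hθ
      _ = θ * (C + c + β) * R := by ring
      _ ≤ β * (1 - q) / 2 * R := mul_le_mul_of_nonneg_right hθS hR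
  linarith

theorem sq_le_mul_sq_of_le {x y C : ℝ} (hx : 0 ≤ x) (hxy : x ≤ C * y) : x ^ 2 ≤ C ^ 2 * y ^ 2 := by
  rw [← mul_pow]
  exact pow_le_pow_left₀ hx hxy 2

theorem exists_absorption_parameters {x β C Co : ℝ} (hx0 : 0 < x) (hxβ : x < β) (hC : 0 < C)
    (hCo : 0 < Co) :
    ∃ α, 0 < α ∧ α < 1 ∧ α * C ≤ x ∧
      ∃ θ, 0 < θ ∧ θ < 1 ∧ θ * (C + α⁻¹ * Co + β) ≤ x := by
  have hβ : 0 < β := hx0.trans hxβ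
  have hα0 : 0 < x / (C + β) := by positivity
  refine ⟨x / (C + β), hα0, (div_lt_one (by positivity)).2 (by linarith), ?_,
    x / (C + (x / (C + β))⁻¹ * Co + β), by positivity, (div_lt_one (by positivity)).2 ?_,
    (div_mul_cancel₀ x (by positivity)).le⟩
  · calc x / (C + β) * C ≤ x / (C + β) * (C + β) := by gcongr; linarith
      _ = x := div_mul_cancel₀ x (by positivity)
  · have : 0 < (x / (C + β))⁻¹ * Co := by positivity
    linarith

theorem quasi_error_contraction_general
    (e o r d : ℕ → ℝ) (β q Crel Co Cred : ℝ)
    (he : ∀ ℓ, 0 ≤ e ℓ) (ho : ∀ ℓ, 0 ≤ o ℓ)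
    (hβ : 0 < β) (hq0 : 0 < q) (hq1 : q < 1)
    (hCrel : 0 < Crel) (hCo : 0 < Co)
    (hβCred : β * Cred ≤ 1)
    (ha : ∀ ℓ, ∀ α : ℝ, 0 < α → α < 1 →
      (1 - α) * (e (ℓ + 1)) ^ 2 + α⁻¹ * Co * (o (ℓ + 1)) ^ 2 + β * (r (ℓ + 1)) ^ 2
        ≤ (e ℓ) ^ 2 + α⁻¹ * Co * (o ℓ) ^ 2 + β * q * (r ℓ) ^ 2
          + (β * Cred - 1) * (d ℓ) ^ 2)
    (hb : ∀ ℓ, e ℓ ≤ Crel * r ℓ)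
    (hc : ∀ ℓ, o ℓ ≤ r ℓ) :
    ∃ γ > (0:ℝ), ∃ lam > (0:ℝ), ∃ κ : ℝ, 0 < κ ∧ κ < 1 ∧
      ∀ ℓ, (e (ℓ + 1)) ^ 2 + lam * (o (ℓ + 1)) ^ 2 + γ * (r (ℓ + 1)) ^ 2
        ≤ κ * ((e ℓ) ^ 2 + lam * (o ℓ) ^ 2 + γ * (r ℓ) ^ 2) := by
  obtain ⟨α, hα0, hα1, hαC, θ, hθ0, hθ1, hθS⟩ :=
    exists_absorption_parameters (x := β * (1 - q) / 2) (β := β) (by nlinarith)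
      (by nlinarith) (by positivity : 0 < Crel ^ 2) hCo
  set c := α⁻¹ * Co
  have h1α : 0 < 1 - α := by linarith
  refine ⟨β / (1 - α), by positivity, c / (1 - α), by positivity, 1 - θ, by linarith, by linarith,
    fun ℓ => le_of_mul_le_mul_left ?_ h1α⟩
  have hΦ : ∀ m, (1 - α) * ((e m) ^ 2 + c / (1 - α) * (o m) ^ 2 + β / (1 - α) * (r m) ^ 2)
      = (1 - α) * (e m) ^ 2 + c * (o m) ^ 2 + β * (r m) ^ 2 := fun m => by field_simp
  have hdrop : (β * Cred - 1) * (d ℓ) ^ 2 ≤ 0 :=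
    mul_nonpos_of_nonpos_of_nonneg (by linarith) (sq_nonneg _)
  have habsorb := add_le_one_sub_mul_of_absorb (sq_nonneg (e ℓ)) (sq_nonneg (r ℓ))
    (by positivity : 0 ≤ c) hα0.le hθ0.le (sq_le_mul_sq_of_le (he ℓ) (hb ℓ))
    (pow_le_pow_left₀ (ho ℓ) (hc ℓ) 2) hαC hθS
  rw [hΦ, mul_left_comm, hΦ]
  linarith [ha ℓ α hα0 hα1]

/-- Abstract contraction theorem for the quasi-error: from the combined estimate (a),
reliability (b), and the oscillation bound (c), one obtains constants `γ, λ > 0` and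
`κ ∈ (0,1)` such that `Δ_ℓ := e_ℓ² + λ o_ℓ² + γ r_ℓ²` contracts. -/
theorem quasi_error_contraction
    (e o r d : ℕ → ℝ) (β q Crel Co Cred : ℝ)
    (he : ∀ ℓ, 0 ≤ e ℓ) (ho : ∀ ℓ, 0 ≤ o ℓ) (hr : ∀ ℓ, 0 ≤ r ℓ) (hd : ∀ ℓ, 0 ≤ d ℓ)
    (hβ : 0 < β) (hq0 : 0 < q) (hq1 : q < 1)
    (hCrel : 0 < Crel) (hCo : 0 < Co) (hCred : 0 < Cred)
    (hβCred : β * Cred ≤ 1)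
    (ha : ∀ ℓ, ∀ α : ℝ, 0 < α → α < 1 →
      (1 - α) * (e (ℓ + 1)) ^ 2 + α⁻¹ * Co * (o (ℓ + 1)) ^ 2 + β * (r (ℓ + 1)) ^ 2
        ≤ (e ℓ) ^ 2 + α⁻¹ * Co * (o ℓ) ^ 2 + β * q * (r ℓ) ^ 2
          + (β * Cred - 1) * (d ℓ) ^ 2)
    (hb : ∀ ℓ, e ℓ ≤ Crel * r ℓ)
    (hc : ∀ ℓ, o ℓ ≤ r ℓ) :
    ∃ γ > (0:ℝ), ∃ lam > (0:ℝ), ∃ κ : ℝ, 0 < κ ∧ κ < 1 ∧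
      ∀ ℓ, (e (ℓ + 1)) ^ 2 + lam * (o (ℓ + 1)) ^ 2 + γ * (r (ℓ + 1)) ^ 2
        ≤ κ * ((e ℓ) ^ 2 + lam * (o ℓ) ^ 2 + γ * (r ℓ) ^ 2) :=
  quasi_error_contraction_general e o r d β q Crel Co Cred he ho hβ hq0 hq1 hCrel hCo hβCred ha hb
    hc
end
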